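/- In the variant Earley algorithm, a suffix item [β] is inserted in T_{j,k} if and only if there exist i, A, α, γ such that S ⇒* a_1⋯a_i A γ, (A → αβ) ∈ P, α ⇒* a_{i+1}⋯a_j, and additionally β ⇒* a_{j+1}⋯a_k. -/

import Mathlib

/-! Formalization of Earley parsing and the Nederhof–Satta variant. -/

variable {T N : Type}

/-- A context-free grammar: a start nonterminal and a set of productions. -/
structure CFG (T N : Type) where
  initial : N
  rules : Set (N × List (Symbol T N))

/-- One rewriting step of the grammar. -/
def CFG.Produces (g : CFG T N) (u v : List (Symbol T N)) : Prop :=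
  ∃ A α p q, (A, α) ∈ g.rules ∧ u = p ++ [Symbol.nonterminal A] ++ q ∧ v = p ++ α ++ q

/-- The derivation relation ⇒* (reflexive-transitive closure of rewriting). -/
def CFG.Derives (g : CFG T N) : List (Symbol T N) → List (Symbol T N) → Prop :=
  Relation.ReflTransGen g.Produces

/-- The language of the grammar: { w | S ⇒* w }. -/
def CFG.language (g : CFG T N) : Set (List T) :=
  { w | g.Derives [Symbol.nonterminal g.initial] (w.map Symbol.terminal) }

/-- `inputSlice w i j` is the substring a_{i+1}⋯a_j of `w` (0-based: w[i..j)), as symbols. -/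
def inputSlice (w : List T) (i j : ℕ) : List (Symbol T N) :=
  ((w.take j).drop i).map Symbol.terminal

/-- The least Earley table: `Earley g w A α β i j` means the dotted item
[A → α • β] is inserted in E_{i,j}. -/
inductive Earley (g : CFG T N) (w : List T) :
    N → List (Symbol T N) → List (Symbol T N) → ℕ → ℕ → Prop where
  | init {α} : (g.initial, α) ∈ g.rules → Earley g w g.initial [] α 0 0
  | predict {B α A β i j γ} : Earley g w B α (Symbol.nonterminal A :: β) i j →
      (A, γ) ∈ g.rules → Earley g w A [] γ j j
  | scan {A α a β i j} : Earley g w A α (Symbol.terminal a :: β) i j →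
      w[j]? = some a → Earley g w A (α ++ [Symbol.terminal a]) β i (j + 1)
  | complete {A α B β i k γ j} : Earley g w A α (Symbol.nonterminal B :: β) i k →
      Earley g w B γ [] k j → (B, γ) ∈ g.rules →
      Earley g w A (α ++ [Symbol.nonterminal B]) β i j

mutual
  /-- Forward part of the variant: `VarU g w β j` means suffix item [β] ∈ U_j. -/
  inductive VarU (g : CFG T N) (w : List T) : List (Symbol T N) → ℕ → Prop where
    | init {α} : (g.initial, α) ∈ g.rules → VarU g w α 0
    | predict {A β j γ} : VarU g w (Symbol.nonterminal A :: β) j →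
        (A, γ) ∈ g.rules → VarU g w γ j
    | scan {a β j} : VarU g w (Symbol.terminal a :: β) j → w[j]? = some a →
        VarU g w β (j + 1)
    | complete {B β k γ j} : VarU g w (Symbol.nonterminal B :: β) k → (B, γ) ∈ g.rules →
        VarT g w γ k j → VarU g w β j

  /-- Backward part of the variant: `VarT g w β j m` means suffix item [β] ∈ T_{j,m}. -/
  inductive VarT (g : CFG T N) (w : List T) : List (Symbol T N) → ℕ → ℕ → Prop where
    | empty {m} : VarU g w [] m → VarT g w [] m m
    | scan {a β j m} : VarU g w (Symbol.terminal a :: β) j → w[j]? = some a →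
        VarT g w β (j + 1) m → VarT g w (Symbol.terminal a :: β) j m
    | complete {B β k γ j m} : VarU g w (Symbol.nonterminal B :: β) k → (B, γ) ∈ g.rules →
        VarT g w γ k j → VarT g w β j m → VarT g w (Symbol.nonterminal B :: β) k m
end

/-! Soundness is a simultaneous induction over the two tables: an item of `U_j` is viable
(`IsViableSuffix`), and an item of `T_{j,m}` is moreover a derivation of `a_{j+1}⋯a_m`.
For completeness, derivations are read as trees (`CFG.Yields`), which split along
concatenation of their targets: a kept terminal is a scan, an expanded nonterminal is a
prediction followed by a completion, and the rule `A → αβ` is predicted at `i` by following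
the derivation `S ⇒* a_1⋯a_i A γ` down to the occurrence of `A`. -/

section inputSlice

variable {w : List T}

theorem inputSlice_eq_take_drop (j k : ℕ) :
    (inputSlice w j k : List (Symbol T N)) = ((w.drop j).take (k - j)).map Symbol.terminal := by
  rw [inputSlice, List.drop_take]

@[simp]
theorem inputSlice_self (j : ℕ) : (inputSlice w j j : List (Symbol T N)) = [] := by
  simp [inputSlice]

theorem inputSlice_zero (i : ℕ) :
    (inputSlice w 0 i : List (Symbol T N)) = (w.take i).map Symbol.terminal := by
  simp [inputSlice]

theorem inputSlice_append {i j k : ℕ} (hij : i ≤ j) (hjk : j ≤ k) :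
    (inputSlice w i j : List (Symbol T N)) ++ inputSlice w j k = inputSlice w i k := by
  have hk : k - i = (j - i) + (k - j) := by omega
  have hj : w.drop j = (w.drop i).drop (j - i) := by rw [List.drop_drop]; congr 1; omega
  simp only [inputSlice_eq_take_drop, ← List.map_append, hk, List.take_add, hj]

theorem inputSlice_eq_cons {j k : ℕ} {a : T} (hjk : j < k) (ha : w[j]? = some a) :
    (inputSlice w j k : List (Symbol T N)) = Symbol.terminal a :: inputSlice w (j + 1) k := by
  rw [← inputSlice_append (Nat.le_succ j) hjk, inputSlice_eq_take_drop j (j + 1)]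
  simp [List.take_one, ha]

theorem lt_of_inputSlice_eq_cons {j k : ℕ} {s : Symbol T N} {x : List (Symbol T N)}
    (h : inputSlice w j k = s :: x) : j < k := by
  by_contra hkj
  rw [inputSlice_eq_take_drop, Nat.sub_eq_zero_of_le (not_lt.mp hkj)] at h
  simp at h

theorem length_inputSlice {j k : ℕ} (hk : k ≤ w.length) :
    (inputSlice w j k : List (Symbol T N)).length = k - j := by
  simp only [inputSlice_eq_take_drop, List.length_map, List.length_take, List.length_drop]
  omega

theorem eq_of_inputSlice_eq_nil {j k : ℕ} (hjk : j ≤ k) (hk : k ≤ w.length)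
    (h : (inputSlice w j k : List (Symbol T N)) = []) : j = k := by
  have := length_inputSlice (N := N) (j := j) hk
  simp only [h, List.length_nil] at this
  omega

theorem inputSlice_eq_append {j k : ℕ} {v₁ v₂ : List (Symbol T N)} (hjk : j ≤ k)
    (hk : k ≤ w.length) (h : inputSlice w j k = v₁ ++ v₂) :
    ∃ m, j ≤ m ∧ m ≤ k ∧ v₁ = inputSlice w j m ∧ v₂ = inputSlice w m k := by
  have hlen := congrArg List.length h
  rw [length_inputSlice hk, List.length_append] at hlen
  have hm : j + v₁.length ≤ k := by omega
  rw [← inputSlice_append (Nat.le_add_right j v₁.length) hm] at h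
  obtain ⟨h₁, h₂⟩ := List.append_inj h (by rw [length_inputSlice (by omega)]; omega)
  exact ⟨_, Nat.le_add_right _ _, hm, h₁.symm, h₂.symm⟩

theorem nonterminal_not_mem_inputSlice (B : N) (j k : ℕ) :
    Symbol.nonterminal B ∉ (inputSlice w j k : List (Symbol T N)) := by
  rw [inputSlice, List.mem_map]
  rintro ⟨_, _, ⟨⟩⟩

end inputSlice

theorem List.append_eq_append_cons {α : Type*} {v₁ v₂ x γ : List α} {s : α}
    (h : v₁ ++ v₂ = x ++ s :: γ) :
    (∃ y, x = v₁ ++ y ∧ v₂ = y ++ s :: γ) ∨ ∃ c, v₁ = x ++ s :: c := by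
  rcases List.append_eq_append_iff.mp h with h | ⟨c, rfl, hc⟩
  · exact .inl h
  · rcases List.cons_eq_append_iff.mp hc with ⟨rfl, rfl⟩ | ⟨c', rfl, rfl⟩
    · exact .inl ⟨[], by simp, rfl⟩
    · exact .inr ⟨c', rfl⟩

namespace CFG

variable (g : CFG T N)

/-- The derivation relation `⇒*` in tree form (see `derives_iff_yields`), which splits along
the source string. -/
inductive Yields : List (Symbol T N) → List (Symbol T N) → Prop
  | nil : Yields [] []
  | keep (s : Symbol T N) {u v} : Yields u v → Yields (s :: u) (s :: v)
  | expand {B ρ u v₁ v₂} : (B, ρ) ∈ g.rules → Yields ρ v₁ → Yields u v₂ →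
      Yields (Symbol.nonterminal B :: u) (v₁ ++ v₂)

variable {g}

theorem Produces.append_left {u v : List (Symbol T N)} (h : g.Produces u v)
    (p : List (Symbol T N)) : g.Produces (p ++ u) (p ++ v) := by
  obtain ⟨A, α, x, y, hr, rfl, rfl⟩ := h
  exact ⟨A, α, p ++ x, y, hr, by simp, by simp⟩

theorem Produces.append_right {u v : List (Symbol T N)} (h : g.Produces u v)
    (p : List (Symbol T N)) : g.Produces (u ++ p) (v ++ p) := by
  obtain ⟨A, α, x, y, hr, rfl, rfl⟩ := h
  exact ⟨A, α, x, y ++ p, hr, by simp, by simp⟩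

theorem Derives.append {u u' v v' : List (Symbol T N)} (hu : g.Derives u u')
    (hv : g.Derives v v') : g.Derives (u ++ v) (u' ++ v') :=
  (hu.lift (· ++ v) fun _ _ h => h.append_right v).trans
    (hv.lift (u' ++ ·) fun _ _ h => h.append_left u')

namespace Yields

theorem refl : ∀ u : List (Symbol T N), g.Yields u u
  | [] => nil
  | s :: u => keep s (refl u)

theorem append {u₁ u₂ v₁ v₂ : List (Symbol T N)} (h₁ : g.Yields u₁ v₁) (h₂ : g.Yields u₂ v₂) :
    g.Yields (u₁ ++ u₂) (v₁ ++ v₂) := by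
  induction h₁ with
  | nil => exact h₂
  | keep s _ ih => exact keep s ih
  | expand hr hρ _ _ ih => rw [List.append_assoc]; exact expand hr hρ ih

theorem of_append {u₁ u₂ v : List (Symbol T N)} (h : g.Yields (u₁ ++ u₂) v) :
    ∃ v₁ v₂, v = v₁ ++ v₂ ∧ g.Yields u₁ v₁ ∧ g.Yields u₂ v₂ := by
  induction u₁ generalizing v with
  | nil => exact ⟨[], v, rfl, nil, h⟩
  | cons s u₁ ih =>
    cases h with
    | keep _ h =>
      obtain ⟨v₁, v₂, rfl, h₁, h₂⟩ := ih h
      exact ⟨s :: v₁, v₂, rfl, keep s h₁, h₂⟩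
    | expand hr hρ h =>
      obtain ⟨v₁, v₂, rfl, h₁, h₂⟩ := ih h
      exact ⟨_ ++ v₁, v₂, (List.append_assoc ..).symm, expand hr hρ h₁, h₂⟩

theorem trans {u v x : List (Symbol T N)} (h : g.Yields u v) (h' : g.Yields v x) :
    g.Yields u x := by
  induction h generalizing x with
  | nil => exact h'
  | keep s _ ih =>
    cases h' with
    | keep _ h' => exact keep s (ih h')
    | expand hr hρ h' => exact expand hr hρ (ih h')
  | expand hr _ _ ihρ ihu =>
    obtain ⟨x₁, x₂, rfl, h₁, h₂⟩ := of_append h'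
    exact expand hr (ihρ h₁) (ihu h₂)

theorem of_rule {B : N} {ρ : List (Symbol T N)} (hr : (B, ρ) ∈ g.rules) :
    g.Yields [Symbol.nonterminal B] ρ := by
  simpa using expand hr (refl ρ) nil

theorem of_produces {u v : List (Symbol T N)} (h : g.Produces u v) : g.Yields u v := by
  obtain ⟨A, α, p, q, hr, rfl, rfl⟩ := h
  exact ((refl p).append (of_rule hr)).append (refl q)

theorem derives {u v : List (Symbol T N)} (h : g.Yields u v) : g.Derives u v := by
  induction h with
  | nil => exact .refl
  | keep s _ ih => exact Derives.append (u := [s]) .refl ih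
  | @expand B ρ u _ _ hr _ _ ihρ ihu =>
    exact .head ⟨B, ρ, [], u, hr, rfl, rfl⟩ (ihρ.append ihu)

end Yields

theorem derives_iff_yields {u v : List (Symbol T N)} : g.Derives u v ↔ g.Yields u v :=
  ⟨fun h => h.rec (.refl u) fun _ hp ih => ih.trans (.of_produces hp), Yields.derives⟩

end CFG

open CFG

section Earley

variable {g : CFG T N} {w : List T}

def IsViableSuffix (g : CFG T N) (w : List T) (β : List (Symbol T N)) (j : ℕ) : Prop :=
  ∃ i A α γ, i ≤ j ∧
    g.Yields [Symbol.nonterminal g.initial] (inputSlice w 0 i ++ Symbol.nonterminal A :: γ) ∧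
    (A, α ++ β) ∈ g.rules ∧ g.Yields α (inputSlice w i j)

namespace IsViableSuffix

theorem init {α : List (Symbol T N)} (hr : (g.initial, α) ∈ g.rules) :
    IsViableSuffix g w α 0 :=
  ⟨0, g.initial, [], [], le_rfl, by simpa using Yields.refl _, by simpa,
    by simpa using Yields.nil⟩

theorem predict {A : N} {β γ : List (Symbol T N)} {j : ℕ}
    (h : IsViableSuffix g w (Symbol.nonterminal A :: β) j) (hr : (A, γ) ∈ g.rules) :
    IsViableSuffix g w γ j := by
  obtain ⟨i, B, α, δ, hij, hS, hrB, hα⟩ := h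
  refine ⟨j, A, [], β ++ δ, le_rfl, hS.trans ?_, by simpa, by simpa using .nil⟩
  have hB : g.Yields (Symbol.nonterminal B :: δ)
      ((inputSlice w i j ++ Symbol.nonterminal A :: β) ++ δ) :=
    .expand hrB (hα.append (.refl _)) (.refl δ)
  simpa [← inputSlice_append (Nat.zero_le i) hij] using (Yields.refl (inputSlice w 0 i)).append hB

theorem scan {a : T} {β : List (Symbol T N)} {j : ℕ}
    (h : IsViableSuffix g w (Symbol.terminal a :: β) j) (ha : w[j]? = some a) :
    IsViableSuffix g w β (j + 1) := by
  obtain ⟨i, A, α, γ, hij, hS, hr, hα⟩ := h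
  refine ⟨i, A, α ++ [Symbol.terminal a], γ, by omega, hS, by simpa using hr, ?_⟩
  rw [← inputSlice_append hij (Nat.le_succ j), inputSlice_eq_cons (Nat.lt_succ_self j) ha,
    inputSlice_self]
  exact hα.append (.refl _)

theorem complete {B : N} {β γ : List (Symbol T N)} {k j : ℕ}
    (h : IsViableSuffix g w (Symbol.nonterminal B :: β) k) (hr : (B, γ) ∈ g.rules)
    (hkj : k ≤ j) (hγ : g.Yields γ (inputSlice w k j)) :
    IsViableSuffix g w β j := by
  obtain ⟨i, A, α, δ, hik, hS, hrA, hα⟩ := h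
  refine ⟨i, A, α ++ [Symbol.nonterminal B], δ, by omega, hS, by simpa using hrA, ?_⟩
  rw [← inputSlice_append hik hkj]
  exact hα.append (.trans (.of_rule hr) hγ)

end IsViableSuffix

mutual

theorem VarU.isViableSuffix {β : List (Symbol T N)} {j : ℕ} :
    VarU g w β j → IsViableSuffix g w β j
  | .init hr => .init hr
  | .predict h hr => h.isViableSuffix.predict hr
  | .scan h ha => h.isViableSuffix.scan ha
  | .complete h hr hγ => h.isViableSuffix.complete hr hγ.sound.2.1 hγ.sound.2.2

theorem VarT.sound {β : List (Symbol T N)} {j m : ℕ} :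
    VarT g w β j m → IsViableSuffix g w β j ∧ j ≤ m ∧ g.Yields β (inputSlice w j m)
  | .empty h => ⟨h.isViableSuffix, le_rfl, by simpa using .nil⟩
  | .scan h ha hβ => by
    obtain ⟨-, hjm, hβ⟩ := hβ.sound
    exact ⟨h.isViableSuffix, by omega, by rw [inputSlice_eq_cons (by omega) ha]; exact .keep _ hβ⟩
  | .complete h hr hγ hβ => by
    obtain ⟨-, hkj, hγ⟩ := hγ.sound
    obtain ⟨-, hjm, hβ⟩ := hβ.sound
    exact ⟨h.isViableSuffix, hkj.trans hjm, by rw [← inputSlice_append hkj hjm]; exact .expand hr hγ hβ⟩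

end

-- The `T`-part and the arbitrary continuation `β` let one induction serve both tables.
theorem VarU.advance_of_yields {α v : List (Symbol T N)} (hα : g.Yields α v) :
    ∀ {i j : ℕ} {β : List (Symbol T N)}, v = inputSlice w i j → i ≤ j → j ≤ w.length →
      VarU g w (α ++ β) i → VarU g w β j ∧ ∀ {k}, VarT g w β j k → VarT g w (α ++ β) i k := by
  induction hα with
  | nil =>
    intro i j β hv hij hj hU
    obtain rfl := eq_of_inputSlice_eq_nil hij hj hv.symm
    exact ⟨hU, id⟩
  | keep s _ ih =>
    intro i j β hv hij hj hU
    have hlt := lt_of_inputSlice_eq_cons hv.symm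
    have ha : w[i]? = some w[i] := List.getElem?_eq_getElem (by omega)
    rw [inputSlice_eq_cons hlt ha, List.cons.injEq] at hv
    obtain ⟨rfl, hv⟩ := hv
    obtain ⟨hβ, hT⟩ := ih hv hlt hj (.scan hU ha)
    exact ⟨hβ, fun hk => .scan hU ha (hT hk)⟩
  | @expand B ρ u v₁ v₂ hr _ _ ihρ ihu =>
    intro i j β hv hij hj hU
    obtain ⟨m, him, hmj, hv₁, hv₂⟩ := inputSlice_eq_append hij hj hv.symm
    obtain ⟨hm, hρ⟩ := ihρ (β := []) hv₁ him (hmj.trans hj) (by simpa using hU.predict hr)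
    have hρ : VarT g w ρ i m := by simpa using hρ (.empty hm)
    obtain ⟨hβ, hT⟩ := ihu hv₂ hmj hj (.complete hU hr hρ)
    exact ⟨hβ, fun hk => .complete hU hr hρ (hT hk)⟩

theorem VarU.of_yields_prefix {α β : List (Symbol T N)} {i j : ℕ} (hU : VarU g w (α ++ β) i)
    (hα : g.Yields α (inputSlice w i j)) (hij : i ≤ j) (hj : j ≤ w.length) : VarU g w β j :=
  (VarU.advance_of_yields hα rfl hij hj hU).1

theorem VarU.varT_of_yields {β : List (Symbol T N)} {j k : ℕ} (hU : VarU g w β j)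
    (hβ : g.Yields β (inputSlice w j k)) (hjk : j ≤ k) (hk : k ≤ w.length) : VarT g w β j k := by
  obtain ⟨hk', hT⟩ := VarU.advance_of_yields hβ rfl hjk hk (β := []) (by simpa using hU)
  simpa using hT (.empty hk')

theorem VarU.predict_of_yields {α v : List (Symbol T N)} (hα : g.Yields α v) :
    ∀ {j i : ℕ} {β γ δ : List (Symbol T N)} {A : N},
      v = inputSlice w j i ++ Symbol.nonterminal A :: γ → j ≤ i → i ≤ w.length →
      VarU g w (α ++ β) j → (A, δ) ∈ g.rules → VarU g w δ i := by
  induction hα with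
  | nil =>
    intro j i β γ δ A hv
    simp at hv
  | keep s _ ih =>
    intro j i β γ δ A hv hji hi hU hr
    rcases List.cons_eq_append_iff.mp hv with ⟨hsl, hA⟩ | ⟨x, hsl, hv⟩
    · obtain rfl := eq_of_inputSlice_eq_nil hji hi hsl
      simp only [List.cons.injEq] at hA
      obtain ⟨rfl, -⟩ := hA
      exact hU.predict hr
    · have hlt := lt_of_inputSlice_eq_cons hsl
      have ha : w[j]? = some w[j] := List.getElem?_eq_getElem (by omega)
      rw [inputSlice_eq_cons hlt ha, List.cons.injEq] at hsl
      obtain ⟨rfl, rfl⟩ := hsl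
      exact ih hv hlt hi (.scan hU ha) hr
  | @expand B ρ u v₁ v₂ hB hρ _ ihρ ihu =>
    intro j i β γ δ A hv hji hi hU hr
    rcases List.append_eq_append_cons hv with ⟨x, hsl, hv₂⟩ | ⟨c, hv₁⟩
    · obtain ⟨m, hjm, hmi, hv₁, rfl⟩ := inputSlice_eq_append hji hi hsl
      have hB' : g.Yields [Symbol.nonterminal B] (inputSlice w j m) := by
        simpa [hv₁] using Yields.expand hB hρ .nil
      have hu := VarU.of_yields_prefix (α := [Symbol.nonterminal B]) hU hB' hjm (hmi.trans hi)
      exact ihu hv₂ hmi hi hu hr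
    · exact ihρ (β := []) hv₁ hji hi (by simpa using hU.predict hB) hr

theorem VarU.of_yields_initial {γ δ : List (Symbol T N)} {i : ℕ} {A : N}
    (hS : g.Yields [Symbol.nonterminal g.initial] (inputSlice w 0 i ++ Symbol.nonterminal A :: γ))
    (hi : i ≤ w.length) (hr : (A, δ) ∈ g.rules) : VarU g w δ i := by
  generalize hv : inputSlice w 0 i ++ Symbol.nonterminal A :: γ = v at hS
  cases hS with
  | keep _ h =>
    rcases List.append_eq_cons_iff.mp hv with ⟨hsl, hA⟩ | ⟨x, hsl, -⟩
    · obtain rfl := eq_of_inputSlice_eq_nil (Nat.zero_le i) hi hsl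
      simp only [List.cons.injEq, Symbol.nonterminal.injEq] at hA
      obtain ⟨rfl, -⟩ := hA
      exact .init hr
    · exact absurd (hsl ▸ List.mem_cons_self) (nonterminal_not_mem_inputSlice _ _ _)
  | expand hS hρ h =>
    cases h
    exact VarU.predict_of_yields hρ (by simpa using hv.symm) (Nat.zero_le i) hi
      (β := []) (by simpa using VarU.init hS) hr

theorem IsViableSuffix.varU {β : List (Symbol T N)} {j : ℕ} (h : IsViableSuffix g w β j)
    (hj : j ≤ w.length) : VarU g w β j := by
  obtain ⟨i, A, α, γ, hij, hS, hr, hα⟩ := h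
  exact (VarU.of_yields_initial hS (hij.trans hj) hr).of_yields_prefix hα hij hj

end Earley

/-- [β] ∈ T_{j,k} iff there are i, A, α, γ with S ⇒* a_1⋯a_i A γ,
(A → αβ) ∈ P, α ⇒* a_{i+1}⋯a_j, and additionally β ⇒* a_{j+1}⋯a_k. -/
theorem variant_T_characterization (g : CFG T N) (w : List T)
    (β : List (Symbol T N)) (j k : ℕ) (hjk : j ≤ k) (hk : k ≤ w.length) :
    VarT g w β j k ↔
      ∃ i A α γ, i ≤ j ∧
        g.Derives [Symbol.nonterminal g.initial]
          ((w.take i).map Symbol.terminal ++ Symbol.nonterminal A :: γ) ∧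
        (A, α ++ β) ∈ g.rules ∧
        g.Derives α (inputSlice w i j) ∧
        g.Derives β (inputSlice w j k) := by
  simp only [derives_iff_yields, ← inputSlice_zero]
  constructor
  · intro h
    obtain ⟨⟨i, A, α, γ, hij, hS, hr, hα⟩, -, hβ⟩ := h.sound
    exact ⟨i, A, α, γ, hij, hS, hr, hα, hβ⟩
  · rintro ⟨i, A, α, γ, hij, hS, hr, hα, hβ⟩
    have hU := IsViableSuffix.varU ⟨i, A, α, γ, hij, hS, hr, hα⟩ (hjk.trans hk)
    exact hU.varT_of_yields hβ hjk hk
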